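/- Every Suslin line contains an uncountable suborder which is order-isomorphic to a lexicographically ordered Suslin tree, i.e., to (S,<_lex) for some Suslin tree (S,<_S) equipped with a lexicographic ordering <_lex. -/

import Mathlib

noncomputable section

open Set

/-- The ordinal `ω₁`. -/
def omega1 : Ordinal := (Cardinal.aleph 1).ord

/-- A set-theoretic tree: a partial order in which the set of predecessors of every
node is well-ordered by the order. -/
def IsSetTree (T : Type) [PartialOrder T] : Prop :=
  ∀ t : T, IsWellOrder {s : T // s < t} (fun a b => (a : T) < (b : T))

/-- The height of a node: the order type of its set of predecessors. -/
noncomputable def nodeHt {T : Type} [PartialOrder T] (hT : IsSetTree T) (t : T) : Ordinal :=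
  @Ordinal.type {s : T // s < t} (fun a b => (a : T) < (b : T)) (hT t)

-- `restr hT t ξ` is the unique `s ≤ t` of height `ξ` (junk value `t` if there is none).
open Classical in
noncomputable def restr {T : Type} [PartialOrder T] (hT : IsSetTree T) (t : T) (ξ : Ordinal) : T :=
  if h : ∃ s : T, s ≤ t ∧ nodeHt hT s = ξ then h.choose else t

/-- Incomparability in the tree order. -/
def Incomp {T : Type} [PartialOrder T] (s t : T) : Prop := ¬ s ≤ t ∧ ¬ t ≤ s

/-- `Δ(s,t)`: the least `α` such that `s↾α ≠ t↾α`. -/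
noncomputable def delta {T : Type} [PartialOrder T] (hT : IsSetTree T) (s t : T) : Ordinal :=
  sInf {α : Ordinal | restr hT s α ≠ restr hT t α}

/-- A family of linear orders on the levels of the tree, coded as a single relation
relating only nodes of the same height. -/
def IsLevelOrderFamily {T : Type} [PartialOrder T] (hT : IsSetTree T) (lo : T → T → Prop) : Prop :=
  (∀ s t, lo s t → nodeHt hT s = nodeHt hT t) ∧
  (∀ t, ¬ lo t t) ∧
  (∀ s t u, lo s t → lo t u → lo s u) ∧
  (∀ s t, s ≠ t → nodeHt hT s = nodeHt hT t → lo s t ∨ lo t s)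

/-- The lexicographic ordering induced by the level orders `lo`:
`t <lex s` iff `t <_T s`, or `t ⊥ s` and `t↾Δ(t,s) ◁ s↾Δ(t,s)`. -/
def lexLT {T : Type} [PartialOrder T] (hT : IsSetTree T) (lo : T → T → Prop) (t s : T) : Prop :=
  t < s ∨ (Incomp t s ∧ lo (restr hT t (delta hT t s)) (restr hT s (delta hT t s)))

/-- An `ω₁`-tree: height `ω₁` and all levels countable. -/
def IsOmega1Tree {T : Type} [PartialOrder T] (hT : IsSetTree T) : Prop :=
  (∀ t : T, nodeHt hT t < omega1) ∧
  (∀ α : Ordinal, α < omega1 → ∃ t : T, nodeHt hT t = α) ∧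
  (∀ α : Ordinal, {t : T | nodeHt hT t = α}.Countable)

def NoUncountableChain (T : Type) [PartialOrder T] : Prop :=
  ∀ C : Set T, IsChain (· ≤ ·) C → C.Countable

def NoUncountableAntichain (T : Type) [PartialOrder T] : Prop :=
  ∀ A : Set T, (∀ s ∈ A, ∀ t ∈ A, s ≠ t → Incomp s t) → A.Countable

/-- An Aronszajn tree: an `ω₁`-tree with no uncountable chains. -/
def IsAronszajnTree {T : Type} [PartialOrder T] (hT : IsSetTree T) : Prop :=
  IsOmega1Tree hT ∧ NoUncountableChain T

/-- A Suslin tree: an `ω₁`-tree with no uncountable chains and no uncountable antichains. -/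
def IsSuslinTree {T : Type} [PartialOrder T] (hT : IsSetTree T) : Prop :=
  IsOmega1Tree hT ∧ NoUncountableChain T ∧ NoUncountableAntichain T

/-- A family of pairs is pairwise disjoint if distinct members are disjoint as sets. -/
def PairwiseDisjointPairs {T : Type} (A : Set (T × T)) : Prop :=
  ∀ a ∈ A, ∀ b ∈ A, a ≠ b → a.1 ≠ b.1 ∧ a.1 ≠ b.2 ∧ a.2 ≠ b.1 ∧ a.2 ≠ b.2

/-- A family of pairs is separated if some `c` lies strictly between the coordinates
of every member. -/
def SeparatedPairs {T : Type} (lt : T → T → Prop) (A : Set (T × T)) : Prop :=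
  ∃ c : T, ∀ a ∈ A, lt a.1 c ∧ lt c a.2

/-- `tpPerp hT lo a b t`: the pair `(a,b)` realizes the type `t` in the lexicographic
order and moreover `a i ⊥ b i` in the tree order, for `i < 2`. (`true` codes `<`.) -/
def tpPerp {T : Type} [PartialOrder T] (hT : IsSetTree T) (lo : T → T → Prop)
    (a b : T × T) (t : Fin 2 → Bool) : Prop :=
  Incomp a.1 b.1 ∧ Incomp a.2 b.2 ∧
  (if t 0 then lexLT hT lo a.1 b.1 else lexLT hT lo b.1 a.1) ∧
  (if t 1 then lexLT hT lo a.2 b.2 else lexLT hT lo b.2 a.2)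

/-- The weakly bi-entangled property of a lexicographically ordered tree. -/
def WeaklyBiEntangled {T : Type} [PartialOrder T] (hT : IsSetTree T) (lo : T → T → Prop) : Prop :=
  ∀ A : Set (T × T), ¬ A.Countable →
    (∀ a ∈ A, lexLT hT lo a.1 a.2) →
    PairwiseDisjointPairs A → SeparatedPairs (lexLT hT lo) A →
    ∃ ξ₀ : Ordinal, ξ₀ < omega1 ∧
      ∀ b ∈ A, ξ₀ ≤ nodeHt hT b.1 → ξ₀ ≤ nodeHt hT b.2 →
        ∀ t : Fin 2 → Bool,
          ∃ a ∈ A, nodeHt hT a.1 < ξ₀ ∧ nodeHt hT a.2 < ξ₀ ∧ tpPerp hT lo a b t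

/-- A normal family of pairs. -/
def NormalFamily {T : Type} [PartialOrder T] (hT : IsSetTree T) (lo : T → T → Prop)
    (B : Set (T × T)) : Prop :=
  ¬ B.Countable ∧
  (∀ b ∈ B, lexLT hT lo b.1 b.2) ∧
  PairwiseDisjointPairs B ∧
  (∀ b ∈ B, nodeHt hT b.1 = nodeHt hT b.2) ∧
  BddAbove {α : Ordinal | ∃ b ∈ B, α = delta hT b.1 b.2} ∧
  sSup {α : Ordinal | ∃ b ∈ B, α = delta hT b.1 b.2} <
    sInf {α : Ordinal | ∃ b ∈ B, α = nodeHt hT b.1} ∧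
  {α : Ordinal | ∃ b ∈ B, α = nodeHt hT b.1} =
    {α : Ordinal | sInf {α : Ordinal | ∃ b ∈ B, α = nodeHt hT b.1} ≤ α ∧ α < omega1}


/-- A linear order is c.c.c. if every family of pairwise disjoint nonempty open
intervals is countable. -/
def CCCOrder (L : Type) [LinearOrder L] : Prop :=
  ∀ F : Set (Set L),
    (∀ s ∈ F, (∃ a b : L, s = Set.Ioo a b) ∧ s.Nonempty) →
    F.Pairwise Disjoint → F.Countable

/-- A linear order is topologically separable if some countable set meets every
nonempty open interval. -/
def TopSeparable (L : Type) [LinearOrder L] : Prop :=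
  ∃ D : Set L, D.Countable ∧
    ∀ a b : L, (Set.Ioo a b).Nonempty → (D ∩ Set.Ioo a b).Nonempty

/-!
Since `L` is c.c.c. it has only countably many points `x` with `Ioo a b = {x}`, so by
non-separability every countable `D ⊆ L` misses some open interval that splits into two nonempty
open halves. Recursively along `ω₁` choose such intervals `(lo δ, hi δ)`, split at `mid δ`, each
missing the endpoints and midpoints chosen before. Then a later interval lies in a half of an
earlier one or is disjoint from it. Put `δ` below `ε` when the interval of `ε` lies in the upper
half of that of `δ`: along a chain the lower halves are pairwise disjoint, along an antichain the
upper halves are, so c.c.c. makes this an uncountable tree without uncountable chains or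
antichains, i.e. a Suslin tree. Ordering each level by midpoints, `δ ↦ mid δ` is an isomorphism of
the lexicographic order onto its image in `L`.
-/

theorem lt_omega1_iff {o : Ordinal.{0}} : o < omega1 ↔ o.card ≤ Cardinal.aleph0 := by
  rw [omega1, Cardinal.lt_ord, Cardinal.lt_aleph_one_iff]

theorem card_omega1 : omega1.card = Cardinal.aleph 1 := Cardinal.card_ord _

theorem countable_Iio_of_lt_omega1 {o : Ordinal.{0}} (ho : o < omega1) : (Iio o).Countable := by
  rw [← Cardinal.le_aleph0_iff_set_countable, Cardinal.mk_Iio_ordinal, Cardinal.lift_le_aleph0]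
  exact lt_omega1_iff.1 ho

theorem countable_Iio_omega1_toType (w : omega1.ToType) : (Iio w).Countable := by
  have h := Cardinal.mk_Iio_lt w
    (by rw [Cardinal.mk_toType, Ordinal.type_toType, omega1, Cardinal.card_ord])
  rw [Cardinal.mk_toType, card_omega1, Cardinal.lt_aleph_one_iff] at h
  exact Cardinal.le_aleph0_iff_set_countable.1 h

instance : Uncountable omega1.ToType := by
  rw [← Cardinal.aleph0_lt_mk_iff, Cardinal.mk_toType, card_omega1]
  exact Cardinal.aleph0_lt_aleph_one

namespace IsSetTree

variable {T L : Type} [PartialOrder T] [LinearOrder L]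

theorem lt_trichotomy_of_lt (hT : IsSetTree T) {s u t : T} (hs : s < t) (hu : u < t) :
    s < u ∨ s = u ∨ u < s := by
  have := hT t
  rcases trichotomous_of (fun a b : {x : T // x < t} => (a : T) < b) ⟨s, hs⟩ ⟨u, hu⟩ with
    h | h | h
  exacts [Or.inl h, Or.inr (Or.inl (congrArg Subtype.val h)), Or.inr (Or.inr h)]

theorem nodeHt_eq_typein (hT : IsSetTree T) {s t : T} (hst : s < t) :
    nodeHt hT s =
      @Ordinal.typein {x : T // x < t} (fun a b => (a : T) < b) (hT t) ⟨s, hst⟩ := by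
  have := hT t
  have := hT s
  rw [← Ordinal.type_subrel]
  exact Ordinal.type_eq.2 ⟨⟨⟨fun u => ⟨⟨u.1, u.2.trans hst⟩, u.2⟩, fun v => ⟨v.1.1, v.2⟩,
    fun _ => rfl, fun _ => rfl⟩, Iff.rfl⟩⟩

theorem nodeHt_strictMono (hT : IsSetTree T) : StrictMono (nodeHt hT) := fun s t hst => by
  have := hT t
  rw [nodeHt_eq_typein hT hst]
  exact Ordinal.typein_lt_type _ _

theorem exists_lt_nodeHt_eq (hT : IsSetTree T) {t : T} {ξ : Ordinal} (hξ : ξ < nodeHt hT t) :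
    ∃ s < t, nodeHt hT s = ξ := by
  have := hT t
  let u := Ordinal.enum (fun a b : {x : T // x < t} => (a : T) < b) ⟨ξ, hξ⟩
  exact ⟨u.1, u.2, by rw [nodeHt_eq_typein hT u.2]; exact Ordinal.typein_enum _ _⟩

theorem incomp_of_nodeHt_eq (hT : IsSetTree T) {s t : T} (hne : s ≠ t)
    (he : nodeHt hT s = nodeHt hT t) : Incomp s t :=
  ⟨fun h => (hT.nodeHt_strictMono (h.lt_of_ne hne)).ne he,
    fun h => (hT.nodeHt_strictMono (h.lt_of_ne hne.symm)).ne he.symm⟩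

theorem eq_of_le_of_nodeHt_eq (hT : IsSetTree T) {s s' t : T} (hs : s ≤ t) (hs' : s' ≤ t)
    (he : nodeHt hT s = nodeHt hT s') : s = s' := by
  by_contra hne
  rcases hs.lt_or_eq with hs | rfl <;> rcases hs'.lt_or_eq with hs' | rfl
  · rcases hT.lt_trichotomy_of_lt hs hs' with h | h | h
    exacts [(hT.nodeHt_strictMono h).ne he, hne h, (hT.nodeHt_strictMono h).ne' he]
  · exact (hT.nodeHt_strictMono hs).ne he
  · exact (hT.nodeHt_strictMono hs').ne' he
  · exact hne rfl

theorem restr_spec (hT : IsSetTree T) {t : T} {ξ : Ordinal} (hξ : ξ ≤ nodeHt hT t) :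
    restr hT t ξ ≤ t ∧ nodeHt hT (restr hT t ξ) = ξ := by
  have hex : ∃ s : T, s ≤ t ∧ nodeHt hT s = ξ := by
    rcases hξ.lt_or_eq with h | h
    · obtain ⟨s, hs, hes⟩ := hT.exists_lt_nodeHt_eq h
      exact ⟨s, hs.le, hes⟩
    · exact ⟨t, le_rfl, h.symm⟩
  rw [restr, dif_pos hex]
  exact hex.choose_spec

theorem restr_nodeHt (hT : IsSetTree T) (t : T) : restr hT t (nodeHt hT t) = t :=
  hT.eq_of_le_of_nodeHt_eq (hT.restr_spec le_rfl).1 le_rfl (hT.restr_spec le_rfl).2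

theorem restr_min_ne (hT : IsSetTree T) {s t : T} (hst : Incomp s t) :
    restr hT s (min (nodeHt hT s) (nodeHt hT t)) ≠
      restr hT t (min (nodeHt hT s) (nodeHt hT t)) := by
  wlog hle : nodeHt hT s ≤ nodeHt hT t generalizing s t
  · rw [min_comm]
    exact (this ⟨hst.2, hst.1⟩ (le_of_not_ge hle)).symm
  rw [min_eq_left hle, hT.restr_nodeHt]
  intro h
  exact hst.1 (h ▸ (hT.restr_spec hle).1)

theorem delta_le_min (hT : IsSetTree T) {s t : T} (hst : Incomp s t) :
    delta hT s t ≤ min (nodeHt hT s) (nodeHt hT t) :=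
  csInf_le' (hT.restr_min_ne hst)

theorem restr_delta_ne (hT : IsSetTree T) {s t : T} (hst : Incomp s t) :
    restr hT s (delta hT s t) ≠ restr hT t (delta hT s t) :=
  csInf_mem (s := {α | restr hT s α ≠ restr hT t α}) ⟨_, hT.restr_min_ne hst⟩

def levelOrderBy (hT : IsSetTree T) (f : T → L) (s t : T) : Prop :=
  nodeHt hT s = nodeHt hT t ∧ f s < f t

theorem isLevelOrderFamily_levelOrderBy (hT : IsSetTree T) {f : T → L}
    (hf : Function.Injective f) : IsLevelOrderFamily hT (hT.levelOrderBy f) :=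
  ⟨fun _ _ h => h.1, fun _ h => lt_irrefl _ h.2,
    fun _ _ _ h₁ h₂ => ⟨h₁.1.trans h₂.1, h₁.2.trans h₂.2⟩,
    fun _ _ hne he => (lt_or_gt_of_ne (hf.ne hne)).imp (⟨he, ·⟩) (⟨he.symm, ·⟩)⟩

theorem lt_iff_lexLT (hT : IsSetTree T) {f : T → L} (hf : Function.Injective f)
    (hmono : StrictMono f)
    (hspread : ∀ {s t x y : T}, Incomp s t → s ≤ x → t ≤ y → f s < f t → f x < f y) (x y : T) :
    f x < f y ↔ lexLT hT (hT.levelOrderBy f) x y := by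
  by_cases hxy : x ≤ y
  · rcases hxy.lt_or_eq with h | rfl
    · exact iff_of_true (hmono h) (Or.inl h)
    · exact iff_of_false (lt_irrefl _) fun h => h.elim (lt_irrefl x) (·.1.1 le_rfl)
  by_cases hyx : y ≤ x
  · refine iff_of_false (hmono.monotone hyx).not_gt ?_
    rintro (h | ⟨h, -⟩)
    exacts [hxy h.le, h.2 hyx]
  have hinc : Incomp x y := ⟨hxy, hyx⟩
  have hd := hT.delta_le_min hinc
  obtain ⟨hsx, hs⟩ := hT.restr_spec (hd.trans (min_le_left _ _))
  obtain ⟨hty, ht⟩ := hT.restr_spec (hd.trans (min_le_right _ _))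
  have hne := hT.restr_delta_ne hinc
  have hst := hT.incomp_of_nodeHt_eq hne (hs.trans ht.symm)
  rw [lexLT, or_iff_right (fun h => hxy h.le), and_iff_right hinc, levelOrderBy,
    and_iff_right (hs.trans ht.symm)]
  refine ⟨fun h => ?_, hspread hst hsx hty⟩
  refine (lt_or_gt_of_ne (hf.ne hne)).resolve_right fun h' => ?_
  exact (hspread ⟨hst.2, hst.1⟩ hty hsx h').not_gt h

theorem nodeHt_lt_omega1 (hT : IsSetTree T) (hchain : NoUncountableChain T) (t : T) :
    nodeHt hT t < omega1 := by
  have hpred : IsChain (· ≤ ·) {s | s < t} := fun a ha b hb hne => by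
    rcases hT.lt_trichotomy_of_lt ha hb with h | h | h
    exacts [Or.inl h.le, absurd h hne, Or.inr h.le]
  rw [lt_omega1_iff, nodeHt, Ordinal.card_type]
  exact Cardinal.le_aleph0_iff_set_countable.2 (hchain _ hpred)

theorem countable_level (hT : IsSetTree T) (hanti : NoUncountableAntichain T) (α : Ordinal) :
    {t : T | nodeHt hT t = α}.Countable :=
  hanti _ fun _ hs _ ht hne => hT.incomp_of_nodeHt_eq hne (hs.trans ht.symm)

theorem exists_nodeHt_eq [Uncountable T] (hT : IsSetTree T) (hanti : NoUncountableAntichain T)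
    {α : Ordinal} (hα : α < omega1) : ∃ t : T, nodeHt hT t = α := by
  by_contra! hmiss
  have hbelow (t : T) : nodeHt hT t < α := by
    refine lt_of_not_ge fun hle => ?_
    rcases hle.lt_or_eq with h | h
    · obtain ⟨s, -, hs⟩ := hT.exists_lt_nodeHt_eq h
      exact hmiss s hs
    · exact hmiss t h.symm
  refine not_countable (α := T) (Set.countable_univ_iff.1 ?_)
  refine ((countable_Iio_of_lt_omega1 hα).biUnion fun β _ => hT.countable_level hanti β).mono ?_
  exact fun t _ => mem_biUnion (hbelow t) rfl

theorem isSuslinTree [Uncountable T] (hT : IsSetTree T) (hchain : NoUncountableChain T)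
    (hanti : NoUncountableAntichain T) : IsSuslinTree hT :=
  ⟨⟨hT.nodeHt_lt_omega1 hchain, fun _ => hT.exists_nodeHt_eq hanti, hT.countable_level hanti⟩,
    hchain, hanti⟩

end IsSetTree

section LinearOrder

variable {L : Type} [LinearOrder L]

theorem Ioo_subset_or_subset_or_disjoint {a p b c d : L} (ha : a ∉ Ioo c d) (hp : p ∉ Ioo c d)
    (hb : b ∉ Ioo c d) :
    Ioo c d ⊆ Ioo a p ∨ Ioo c d ⊆ Ioo p b ∨ Disjoint (Ioo a b) (Ioo c d) := by
  simp only [mem_Ioo, not_and_or, not_lt] at ha hp hb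
  by_cases hbc : b ≤ c
  · exact Or.inr (Or.inr (disjoint_left.2 fun x hx hx' => hx.2.not_ge (hbc.trans hx'.1.le)))
  by_cases hda : d ≤ a
  · exact Or.inr (Or.inr (disjoint_left.2 fun x hx hx' => hx'.2.not_ge (hda.trans hx.1.le)))
  have hac : a ≤ c := ha.resolve_right hda
  have hdb : d ≤ b := hb.resolve_left hbc
  rcases hp with hpc | hdp
  · exact Or.inr (Or.inl (Ioo_subset_Ioo hpc hdb))
  · exact Or.inl (Ioo_subset_Ioo hac hdp)

theorem Set.OrdConnected.lt_of_disjoint {s t : Set L} (hs : s.OrdConnected) (ht : t.OrdConnected)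
    (hst : Disjoint s t) {x x' y y' : L} (hx : x ∈ s) (hx' : x' ∈ s) (hy : y ∈ t) (hy' : y' ∈ t)
    (hxy : x < y) : x' < y' := by
  by_contra! hyx
  rcases le_or_gt y x' with hyx' | hxy'
  · exact disjoint_left.1 hst (hs.out hx hx' ⟨hxy.le, hyx'⟩) hy
  · exact disjoint_left.1 hst hx' (ht.out hy' hy ⟨hyx, hxy'.le⟩)

theorem CCCOrder.countable_of_pairwiseDisjoint {ι : Type*} (hccc : CCCOrder L) {s : Set ι}
    {l r : ι → L} (hne : ∀ i ∈ s, (Ioo (l i) (r i)).Nonempty)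
    (hdisj : s.PairwiseDisjoint fun i => Ioo (l i) (r i)) : s.Countable := by
  have hinj : InjOn (fun i => Ioo (l i) (r i)) s := fun i hi j hj hij => by
    by_contra hne'
    obtain ⟨x, hx⟩ := hne i hi
    exact disjoint_left.1 (hdisj hi hj hne') hx (hij ▸ hx)
  refine countable_of_injective_of_countable_image hinj (hccc _ ?_ ?_)
  · rintro _ ⟨i, hi, rfl⟩
    exact ⟨⟨_, _, rfl⟩, hne i hi⟩
  · rintro _ ⟨i, hi, rfl⟩ _ ⟨j, hj, rfl⟩ hij
    exact hdisj hi hj fun h => hij (h ▸ rfl)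

def singletonIntervalPoints (L : Type) [LinearOrder L] : Set L :=
  {x | ∃ a b : L, Ioo a b = {x}}

theorem CCCOrder.countable_singletonIntervalPoints (hccc : CCCOrder L) :
    (singletonIntervalPoints L).Countable := by
  refine countable_of_injective_of_countable_image singleton_injective.injOn (hccc _ ?_ ?_)
  · rintro _ ⟨x, ⟨a, b, hab⟩, rfl⟩
    exact ⟨⟨a, b, hab.symm⟩, singleton_nonempty x⟩
  · rintro _ ⟨x, -, rfl⟩ _ ⟨y, -, rfl⟩ hxy
    exact disjoint_singleton.2 fun h => hxy (h ▸ rfl)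

theorem exists_ne_mem_Ioo {a b x : L} (hx : x ∈ Ioo a b) (hx' : x ∉ singletonIntervalPoints L) :
    ∃ y ∈ Ioo a b, y ≠ x := by
  by_contra! h
  exact hx' ⟨a, b, eq_singleton_iff_unique_mem.2 ⟨hx, h⟩⟩

theorem exists_Ioo_disjoint_of_countable (hccc : CCCOrder L) (hnsep : ¬ TopSeparable L)
    {D : Set L} (hD : D.Countable) :
    ∃ a p b : L, Disjoint (Ioo a b) D ∧ (Ioo a p).Nonempty ∧ (Ioo p b).Nonempty := by
  obtain ⟨a, b, ⟨x, hx⟩, hab⟩ : ∃ a b : L,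
      (Ioo a b).Nonempty ∧ Disjoint (Ioo a b) (D ∪ singletonIntervalPoints L) := by
    by_contra! h
    refine hnsep ⟨_, hD.union hccc.countable_singletonIntervalPoints, fun a b hne => ?_⟩
    rw [inter_comm]
    exact not_disjoint_iff_nonempty_inter.1 (h a b hne)
  rw [disjoint_union_right] at hab
  have hsing {z : L} (hz : z ∈ Ioo a b) : z ∉ singletonIntervalPoints L :=
    disjoint_left.1 hab.2 hz
  -- With `u = min x y < v = max x y`, any `z ≠ v` in `(u, b)` makes `min v z` split `(a, b)`.
  obtain ⟨y, hy, hyx⟩ := exists_ne_mem_Ioo hx (hsing hx)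
  have huv : min x y < max x y := min_lt_max.2 hyx.symm
  have hv : max x y ∈ Ioo (min x y) b := ⟨huv, max_lt hx.2 hy.2⟩
  obtain ⟨z, hz, hzv⟩ :=
    exists_ne_mem_Ioo hv (hsing ⟨(lt_min hx.1 hy.1).trans huv, max_lt hx.2 hy.2⟩)
  exact ⟨a, min (max x y) z, b, hab.1, ⟨min x y, lt_min hx.1 hy.1, lt_min huv hz.1⟩,
    ⟨max (max x y) z, min_lt_max.2 hzv.symm, max_lt hv.2 hz.2⟩⟩

end LinearOrder

structure IntervalScheme (W L : Type) [LinearOrder W] [LinearOrder L] where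
  lo : W → L
  mid : W → L
  hi : W → L
  lowerHalf_nonempty (w : W) : (Ioo (lo w) (mid w)).Nonempty
  upperHalf_nonempty (w : W) : (Ioo (mid w) (hi w)).Nonempty
  disjoint_of_lt {v w : W} : v < w → Disjoint ({lo v, mid v, hi v} : Set L) (Ioo (lo w) (hi w))

theorem nonempty_intervalScheme {W L : Type} [LinearOrder W] [WellFoundedLT W] [LinearOrder L]
    (hW : ∀ w : W, (Iio w).Countable) (hccc : CCCOrder L) (hnsep : ¬ TopSeparable L) :
    Nonempty (IntervalScheme W L) := by
  have hsplit (D : Set L) (hD : D.Countable) := exists_Ioo_disjoint_of_countable hccc hnsep hD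
  have : Nonempty L := ⟨(hsplit ∅ countable_empty).choose⟩
  choose! lo mid hi hdisj hlower hupper using hsplit
  -- `S w` collects the points chosen before `w`; the points at `w` are chosen to avoid it.
  let S : W → Set L :=
    wellFounded_lt.fix fun w S => ⋃ v : Iio w, {lo (S v v.2), mid (S v v.2), hi (S v v.2)}
  have hS (w : W) : S w = ⋃ v : Iio w, {lo (S v), mid (S v), hi (S v)} :=
    wellFounded_lt.fix_eq _ w
  have hScount (w : W) : (S w).Countable := by
    have := (hW w).to_subtype
    rw [hS]
    exact countable_iUnion fun _ => (countable_singleton _).insert _ |>.insert _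
  refine ⟨⟨lo ∘ S, mid ∘ S, hi ∘ S, fun w => hlower _ (hScount w), fun w => hupper _ (hScount w),
    fun {v w} hvw => (hdisj _ (hScount w)).symm.mono_left ?_⟩⟩
  rw [hS w]
  exact subset_iUnion_of_subset ⟨v, hvw⟩ subset_rfl

namespace IntervalScheme

variable {W L : Type} [LinearOrder W] [LinearOrder L]

variable (I : IntervalScheme W L)

def interval (w : W) : Set L := Ioo (I.lo w) (I.hi w)

def lowerHalf (w : W) : Set L := Ioo (I.lo w) (I.mid w)

def upperHalf (w : W) : Set L := Ioo (I.mid w) (I.hi w)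

theorem mid_mem_interval (w : W) : I.mid w ∈ I.interval w := by
  obtain ⟨x, hx⟩ := I.lowerHalf_nonempty w
  obtain ⟨y, hy⟩ := I.upperHalf_nonempty w
  exact ⟨hx.1.trans hx.2, hy.1.trans hy.2⟩

theorem lowerHalf_subset_interval (w : W) : I.lowerHalf w ⊆ I.interval w :=
  Ioo_subset_Ioo_right (I.mid_mem_interval w).2.le

theorem upperHalf_subset_interval (w : W) : I.upperHalf w ⊆ I.interval w :=
  Ioo_subset_Ioo_left (I.mid_mem_interval w).1.le

theorem disjoint_lowerHalf_upperHalf (w : W) : Disjoint (I.lowerHalf w) (I.upperHalf w) :=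
  disjoint_left.2 fun _ hx hx' => hx.2.not_gt hx'.1

theorem ordConnected_interval (w : W) : (I.interval w).OrdConnected := ordConnected_Ioo

theorem mid_not_mem_interval {v w : W} (h : v < w) : I.mid v ∉ I.interval w :=
  disjoint_left.1 (I.disjoint_of_lt h) (by simp)

theorem mid_injective : Function.Injective I.mid := by
  intro v w hvw
  by_contra hne
  rcases lt_or_gt_of_ne hne with h | h
  · exact I.mid_not_mem_interval h (hvw ▸ I.mid_mem_interval w)
  · exact I.mid_not_mem_interval h (hvw ▸ I.mid_mem_interval v)

theorem subset_or_subset_or_disjoint {v w : W} (h : v < w) :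
    I.interval w ⊆ I.lowerHalf v ∨ I.interval w ⊆ I.upperHalf v ∨
      Disjoint (I.interval v) (I.interval w) :=
  Ioo_subset_or_subset_or_disjoint (disjoint_left.1 (I.disjoint_of_lt h) (by simp))
    (I.mid_not_mem_interval h) (disjoint_left.1 (I.disjoint_of_lt h) (by simp))

def TreeLT (v w : W) : Prop := I.interval w ⊆ I.upperHalf v

variable {I}

theorem TreeLT.mid_lt_mid {v w : W} (h : I.TreeLT v w) : I.mid v < I.mid w :=
  (h (I.mid_mem_interval w)).1

theorem TreeLT.trans {u v w : W} (huv : I.TreeLT u v) (hvw : I.TreeLT v w) : I.TreeLT u w :=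
  Subset.trans hvw ((I.upperHalf_subset_interval v).trans huv)

theorem TreeLT.lt {v w : W} (h : I.TreeLT v w) : v < w := by
  refine lt_of_not_ge fun hwv => ?_
  rcases hwv.lt_or_eq with hwv | rfl
  · exact I.mid_not_mem_interval hwv (I.upperHalf_subset_interval v (h (I.mid_mem_interval w)))
  · exact h.mid_lt_mid.false

theorem TreeLT.treeLT_of_lt {u v w : W} (hvu : I.TreeLT v u) (hwu : I.TreeLT w u)
    (hvw : v < w) : I.TreeLT v w := by
  have hu := I.mid_mem_interval u
  rcases I.subset_or_subset_or_disjoint hvw with hl | hu' | hd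
  · exact absurd (hl ((I.upperHalf_subset_interval w) (hwu hu)))
      (disjoint_right.1 (I.disjoint_lowerHalf_upperHalf v) (hvu hu))
  · exact hu'
  · exact absurd (I.upperHalf_subset_interval w (hwu hu))
      (disjoint_left.1 hd (I.upperHalf_subset_interval v (hvu hu)))

theorem TreeLT.disjoint_lowerHalf {v w : W} (h : I.TreeLT v w) :
    Disjoint (I.lowerHalf v) (I.lowerHalf w) :=
  (I.disjoint_lowerHalf_upperHalf v).mono_right ((I.lowerHalf_subset_interval w).trans h)

theorem disjoint_upperHalf_of_lt {v w : W} (hvw : v < w) (h : ¬ I.TreeLT v w) :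
    Disjoint (I.upperHalf v) (I.upperHalf w) := by
  rcases I.subset_or_subset_or_disjoint hvw with hl | hu | hd
  · exact (I.disjoint_lowerHalf_upperHalf v).symm.mono_right
      ((I.upperHalf_subset_interval w).trans hl)
  · exact absurd hu h
  · exact hd.mono (I.upperHalf_subset_interval v) (I.upperHalf_subset_interval w)

theorem lt_of_mid_lt_mid {v w : W} (hne : v ≠ w) (hvw : ¬ I.TreeLT v w) (hwv : ¬ I.TreeLT w v)
    (hmid : I.mid v < I.mid w) {x y : L} (hx : x ∈ Ico (I.mid v) (I.hi v))
    (hy : y ∈ Ico (I.mid w) (I.hi w)) : x < y := by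
  have hxv : x ∈ I.interval v := ⟨(I.mid_mem_interval v).1.trans_le hx.1, hx.2⟩
  have hyw : y ∈ I.interval w := ⟨(I.mid_mem_interval w).1.trans_le hy.1, hy.2⟩
  have hsep (hd : Disjoint (I.interval v) (I.interval w)) : x < y :=
    (I.ordConnected_interval v).lt_of_disjoint (I.ordConnected_interval w) hd
      (I.mid_mem_interval v) hxv (I.mid_mem_interval w) hyw hmid
  rcases lt_or_gt_of_ne hne with h | h
  · rcases I.subset_or_subset_or_disjoint h with hl | hu | hd
    · exact absurd hmid (hl (I.mid_mem_interval w)).2.not_gt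
    · exact absurd hu hvw
    · exact hsep hd
  · rcases I.subset_or_subset_or_disjoint h with hl | hu | hd
    · exact (hl hxv).2.trans_le hy.1
    · exact absurd hu hwv
    · exact hsep hd.symm

variable (I)

/-- A type synonym for `W`, so that it carries the tree order `I.TreeLT` rather than the order
of `W`. -/
def Tree (_ : IntervalScheme W L) : Type := W

instance : PartialOrder I.Tree :=
  @partialOrderOfSO I.Tree I.TreeLT
    { irrefl := fun _ h => h.mid_lt_mid.false, trans := fun _ _ _ => TreeLT.trans }

instance [Uncountable W] : Uncountable I.Tree := ‹Uncountable W›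

theorem isSetTree [WellFoundedLT W] : IsSetTree I.Tree := fun _ =>
  { trichotomous := fun a b hab hba => Subtype.ext <| by
      by_contra hne
      rcases lt_or_gt_of_ne (α := W) hne with h | h
      exacts [hab (a.2.treeLT_of_lt b.2 h), hba (b.2.treeLT_of_lt a.2 h)]
    wf := (InvImage.wf (fun a => (a.1 : W)) wellFounded_lt).mono fun _ _ h => TreeLT.lt h }

theorem noUncountableChain (hccc : CCCOrder L) : NoUncountableChain I.Tree := fun C hC =>
  hccc.countable_of_pairwiseDisjoint (fun w _ => I.lowerHalf_nonempty w) fun x hx y hy hne => by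
    rcases hC hx hy hne with h | h
    · exact TreeLT.disjoint_lowerHalf (h.resolve_left hne)
    · exact (TreeLT.disjoint_lowerHalf (h.resolve_left hne.symm)).symm

theorem noUncountableAntichain (hccc : CCCOrder L) : NoUncountableAntichain I.Tree := fun A hA =>
  hccc.countable_of_pairwiseDisjoint (fun w _ => I.upperHalf_nonempty w) fun x hx y hy hne => by
    have hinc := hA x hx y hy hne
    rcases lt_or_gt_of_ne (α := W) hne with h | h
    · exact I.disjoint_upperHalf_of_lt h fun h' => hinc.1 (Or.inr h')
    · exact (I.disjoint_upperHalf_of_lt h fun h' => hinc.2 (Or.inr h')).symm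

theorem mid_strictMono : StrictMono (α := I.Tree) I.mid := fun _ _ h => TreeLT.mid_lt_mid h

theorem mid_mem_Ico_of_le {x y : I.Tree} (h : x ≤ y) : I.mid y ∈ Ico (I.mid x) (I.hi x) := by
  rcases h with rfl | h
  · exact ⟨le_rfl, (I.mid_mem_interval x).2⟩
  · exact Ioo_subset_Ico_self (h (I.mid_mem_interval y))

theorem mid_lt_mid_of_incomp {s t x y : I.Tree} (hst : Incomp s t) (hsx : s ≤ x) (hty : t ≤ y)
    (h : I.mid s < I.mid t) : I.mid x < I.mid y :=
  lt_of_mid_lt_mid (I := I) (fun he => hst.1 (Or.inl he)) (fun h' => hst.1 (Or.inr h'))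
    (fun h' => hst.2 (Or.inr h')) h (I.mid_mem_Ico_of_le hsx) (I.mid_mem_Ico_of_le hty)

end IntervalScheme

/-- Every Suslin line contains an uncountable suborder which is order-isomorphic to a
lexicographically ordered Suslin tree `(S, <lex)`. -/
theorem suslinLine_contains_lexOrderedSuslinTree (L : Type) [LinearOrder L]
    (hccc : CCCOrder L) (hnsep : ¬ TopSeparable L) :
    ∃ (S : Type) (ps : PartialOrder S) (hT : @IsSetTree S ps) (lo : S → S → Prop),
      @IsLevelOrderFamily S ps hT lo ∧ @IsSuslinTree S ps hT ∧
      ∃ (A : Set L) (f : A → S), ¬ A.Countable ∧ Function.Bijective f ∧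
        ∀ x y : A, (x : L) < (y : L) ↔ @lexLT S ps hT lo (f x) (f y) := by
  obtain ⟨I⟩ := nonempty_intervalScheme countable_Iio_omega1_toType hccc hnsep
  have hT := I.isSetTree
  let e := Equiv.ofInjective _ I.mid_injective
  refine ⟨I.Tree, inferInstance, hT, hT.levelOrderBy I.mid,
    hT.isLevelOrderFamily_levelOrderBy I.mid_injective,
    hT.isSuslinTree (I.noUncountableChain hccc) (I.noUncountableAntichain hccc),
    range I.mid, e.symm, fun h => ?_, e.symm.bijective, fun x y => ?_⟩
  · have := h.to_subtype
    exact not_countable (α := omega1.ToType) e.injective.countable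
  · rw [← Equiv.apply_ofInjective_symm I.mid_injective x,
      ← Equiv.apply_ofInjective_symm I.mid_injective y]
    exact hT.lt_iff_lexLT I.mid_injective I.mid_strictMono I.mid_lt_mid_of_incomp _ _

end
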